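/- Let τ := Δ + q_δ, where q_δ is the absolute value of the δ-quantile of Lap(Δ/ε), and let M denote the PositiveLaplaceMechanism with parameters ε, τ and sensitivity Δ. Then for every v ∈ ℝ and every measurable set S ⊂ ℝ, P(M(v) ∈ S ∩ [v, v + Δ]) ≤ δ. -/

import Mathlib

open MeasureTheory Real

/-- The Laplace distribution on ℝ with location 0 and scale `b`. -/
noncomputable def laplace (b : ℝ) : Measure ℝ :=
  volume.withDensity fun x => ENNReal.ofReal ((2 * b)⁻¹ * Real.exp (-|x| / b))

/-- On input `v`, the PositiveLaplaceMechanism samples `η ~ Lap(Δ/ε)` and outputs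
`max v (v + τ + η)`; so `P(M(v) ∈ S)` is the Laplace measure of the preimage. -/
noncomputable def posLapProb (ε τ Δ : ℝ) (v : ℝ) (S : Set ℝ) : ENNReal :=
  laplace (Δ / ε) {η : ℝ | max v (v + τ + η) ∈ S}

/-! An output in `[v, v + Δ]` forces `v + τ + η ≤ v + Δ`, i.e. `η ≤ -q_δ`, and the left tail
of `Lap(b)` below `-q_δ` has mass exactly `δ`. -/

open Set

lemma laplace_Iic_of_nonpos {b c : ℝ} (hb : 0 < b) (hc : c ≤ 0) :
    laplace b (Iic c) = ENNReal.ofReal (exp (c / b) / 2) := by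
  have hdens : EqOn (fun x => ENNReal.ofReal ((2 * b)⁻¹ * exp (-|x| / b)))
      (fun x => ENNReal.ofReal ((2 * b)⁻¹ * exp (b⁻¹ * x))) (Iic c) := by
    intro x (hx : x ≤ c)
    simp only [abs_of_nonpos (hx.trans hc), neg_neg, div_eq_inv_mul]
  have hb' : 0 < b⁻¹ := inv_pos.2 hb
  rw [laplace, withDensity_apply _ measurableSet_Iic,
    setLIntegral_congr_fun measurableSet_Iic hdens,
    ← ofReal_integral_eq_lintegral_ofReal ((integrableOn_exp_mul_Iic hb' c).const_mul _)
      (ae_of_all _ fun x => by positivity),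
    integral_const_mul, integral_exp_mul_Iic hb']
  congr 1
  field_simp

lemma laplace_Iic_neg_quantile {b φ : ℝ} (hb : 0 < b) (hφ : φ ∈ Ioc 0 (1 / 2)) :
    laplace b (Iic (-(b * log (1 / (2 * φ))))) = ENNReal.ofReal φ := by
  obtain ⟨hφ0, hφhalf⟩ := hφ
  have hlog : 0 ≤ log (1 / (2 * φ)) :=
    log_nonneg (by rw [le_div_iff₀ (by positivity)]; linarith)
  rw [laplace_Iic_of_nonpos hb (by nlinarith), neg_div, mul_div_cancel_left₀ _ hb.ne',
    exp_neg, exp_log (by positivity)]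
  congr 1
  field_simp

lemma setOf_max_mem_inter_Icc_subset_Iic (v τ Δ : ℝ) (S : Set ℝ) :
    {η : ℝ | max v (v + τ + η) ∈ S ∩ Icc v (v + Δ)} ⊆ Iic (Δ - τ) := by
  rintro η ⟨-, -, hle⟩
  have := (le_max_right v (v + τ + η)).trans hle
  rw [mem_Iic]
  linarith

/-- With `τ := Δ + q_δ` where `q_δ = (Δ/ε)·ln(1/(2δ))` is the absolute value of the
`δ`-quantile of `Lap(Δ/ε)`, for every `v` and every measurable `S`,
`P(M(v) ∈ S ∩ [v, v + Δ]) ≤ δ`. -/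
theorem stmt_5 (ε δ Δ : ℝ) (hε : 0 < ε) (hδ : δ ∈ Set.Ioo (0 : ℝ) (1 / 2)) (hΔ : 0 < Δ)
    (τ : ℝ) (hτ : τ = Δ + (Δ / ε) * Real.log (1 / (2 * δ))) :
    ∀ v : ℝ, ∀ S : Set ℝ, MeasurableSet S →
      posLapProb ε τ Δ v (S ∩ Set.Icc v (v + Δ)) ≤ ENNReal.ofReal δ := by
  intro v S _
  have htail : Δ - τ = -(Δ / ε * log (1 / (2 * δ))) := by rw [hτ]; ring
  calc posLapProb ε τ Δ v (S ∩ Icc v (v + Δ))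
      ≤ laplace (Δ / ε) (Iic (Δ - τ)) := measure_mono (setOf_max_mem_inter_Icc_subset_Iic v τ Δ S)
    _ = ENNReal.ofReal δ := by
      rw [htail]
      exact laplace_Iic_neg_quantile (div_pos hΔ hε) ⟨hδ.1, hδ.2.le⟩
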